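/- Let n ≥ 2 and let B be an n×n complex matrix with Σ_{i,j} |B_{ij}|² = 1 and P := Σ_i |B_{ii}|² ≥ 1/n. Define x := (1/(n−1))·Σ_{i≠j} |(Bᴴ B)_{ij}| and y := (n·P − 1)/(n−1). Then either x + y ≤ 1, or ( (x + y − (n−2)/(n−1)) · (n−1)/√n )² + ( (x−y)² · (n−1)/n ) ≤ 1. -/

import Mathlib

open Matrix Finset

/-!
Let `u k = ‖B k k‖` and let `w k` be the ℓ² norm of the off-diagonal part of row `k`, so that
`∑ u k ^ 2 = P` and `∑ w k ^ 2 = 1 - P`. Expanding `(Bᴴ B)_{ij}` along the rows of `B` and applying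
Cauchy–Schwarz to the off-diagonal entries of each row gives, for `X = (n - 1) x`,
`X ≤ (n - 2) (1 - P) + 2 √(n - 1) ∑ u k * w k ≤ (n - 2) (1 - P) + 2 √((n - 1) P (1 - P))`.
In the coordinates `X` and `Q = n P - 1 = (n - 1) y`, the region `ℰ` is `ellipseForm n X Q ≤ n (n - 1)`,
and as `P` runs over `[0, 1]` the upper bound for `X` traces the boundary of `ℰ`. If `x + y > 1`, then
`X` lies between that boundary point and the point of the line `x + y = 1` at the same height `Q`,
which is in `ℰ` since `1 / n ≤ P ≤ 1`; as `ℰ` is convex, so is `(X, Q)`.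
-/

lemma norm_conjTranspose_mul_self_apply_le {ι κ 𝕜 : Type*} [Fintype κ] [RCLike 𝕜]
    (B : Matrix κ ι 𝕜) (i j : ι) : ‖(Bᴴ * B) i j‖ ≤ ∑ k, ‖B k i‖ * ‖B k j‖ := by
  simp only [mul_apply, conjTranspose_apply]
  refine (norm_sum_le _ _).trans_eq (sum_congr rfl fun k _ => ?_)
  rw [norm_mul, norm_star]

section
variable {ι : Type*} [Fintype ι] [DecidableEq ι]

lemma sum_sum_filter_ne_mul_eq {R : Type*} [CommRing R] (f : ι → R) :
    ∑ i, ∑ j ∈ univ.filter (· ≠ i), f i * f j = (∑ i, f i) ^ 2 - ∑ i, f i ^ 2 := by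
  simp only [filter_ne', ← mul_sum, sum_erase_eq_sub (mem_univ _), sum_sub_distrib,
    ← sum_mul, sq]

lemma sq_sum_sub_sum_sq_le {v : ι → ℝ} (hv : ∀ j, 0 ≤ v j) (k : ι) :
    (∑ j, v j) ^ 2 - ∑ j, v j ^ 2 ≤
      (Fintype.card ι - 2) * (∑ j, v j ^ 2 - v k ^ 2) +
        2 * √(Fintype.card ι - 1) * v k * √(∑ j, v j ^ 2 - v k ^ 2) := by
  set T := ∑ j ∈ univ.erase k, v j
  set W := ∑ j ∈ univ.erase k, v j ^ 2
  have hsum : ∑ j, v j = v k + T := (add_sum_erase _ _ (mem_univ k)).symm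
  have hsq : ∑ j, v j ^ 2 = v k ^ 2 + W := (add_sum_erase _ _ (mem_univ k)).symm
  have hcard : ((univ.erase k).card : ℝ) = Fintype.card ι - 1 := by
    rw [card_erase_of_mem (mem_univ k), card_univ, Nat.cast_pred (Fintype.card_pos_iff.2 ⟨k⟩)]
  have hm : 0 ≤ (Fintype.card ι : ℝ) - 1 := by rw [← hcard]; positivity
  have hW : 0 ≤ W := sum_nonneg fun j _ => sq_nonneg _
  have hT0 : 0 ≤ T := sum_nonneg fun j _ => hv j
  have hT : T ≤ √(Fintype.card ι - 1) * √W := by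
    rw [← Real.sqrt_mul hm, ← hcard]
    exact Real.le_sqrt_of_sq_le (sq_sum_le_card_mul_sum_sq ..)
  rw [hsum, hsq, add_sub_cancel_left]
  have hm2 := Real.sq_sqrt hm
  have hW2 := Real.sq_sqrt hW
  nlinarith [mul_le_mul_of_nonneg_left hT (hv k), pow_le_pow_left₀ hT0 hT 2]

lemma sum_filter_ne_norm_conjTranspose_mul_self_le {𝕜 : Type*} [RCLike 𝕜] (B : Matrix ι ι 𝕜) :
    ∑ i, ∑ j ∈ univ.filter (· ≠ i), ‖(Bᴴ * B) i j‖ ≤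
      (Fintype.card ι - 2) * (∑ i, ∑ j, ‖B i j‖ ^ 2 - ∑ i, ‖B i i‖ ^ 2) +
        2 * √(Fintype.card ι - 1) * √(∑ i, ‖B i i‖ ^ 2) *
          √(∑ i, ∑ j, ‖B i j‖ ^ 2 - ∑ i, ‖B i i‖ ^ 2) := by
  set m := √(Fintype.card ι - 1)
  calc ∑ i, ∑ j ∈ univ.filter (· ≠ i), ‖(Bᴴ * B) i j‖
      ≤ ∑ i, ∑ j ∈ univ.filter (· ≠ i), ∑ k, ‖B k i‖ * ‖B k j‖ := by
        gcongr with i _ j _; exact norm_conjTranspose_mul_self_apply_le B i j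
    _ = ∑ k, ((∑ j, ‖B k j‖) ^ 2 - ∑ j, ‖B k j‖ ^ 2) := by
        simp only [← sum_sum_filter_ne_mul_eq]
        exact (sum_congr rfl fun i _ => sum_comm).trans sum_comm
    _ ≤ ∑ k, ((Fintype.card ι - 2) * (∑ j, ‖B k j‖ ^ 2 - ‖B k k‖ ^ 2) +
          2 * m * (√(‖B k k‖ ^ 2) * √(∑ j, ‖B k j‖ ^ 2 - ‖B k k‖ ^ 2))) := by
        gcongr with k
        rw [Real.sqrt_sq (norm_nonneg _), ← mul_assoc]
        exact sq_sum_sub_sum_sq_le (fun j => norm_nonneg _) k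
    _ ≤ _ := by
        rw [sum_add_distrib, ← mul_sum, ← mul_sum, ← sum_sub_distrib, mul_assoc (2 * m)]
        gcongr
        exact Real.sum_sqrt_mul_sqrt_le _ (fun k => sq_nonneg _) fun k =>
          sub_nonneg.2 (single_le_sum (fun j _ => sq_nonneg ‖B k j‖) (mem_univ k))
end

def ellipseForm (n X Q : ℝ) : ℝ := (n - 1) * (X + Q - (n - 2)) ^ 2 + (X - Q) ^ 2

lemma convexOn_ellipseForm {n : ℝ} (hn : 1 ≤ n) (Q : ℝ) :
    ConvexOn ℝ Set.univ fun X => ellipseForm n X Q := by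
  have hsq : ConvexOn ℝ Set.univ fun t : ℝ => t ^ 2 := even_two.convexOn_pow
  have h := ((hsq.translate_left (Q - (n - 2))).smul (sub_nonneg.2 hn)).add
    (hsq.translate_left (-Q))
  rw [Set.preimage_univ] at h
  refine h.congr fun X _ => ?_
  simp only [ellipseForm, Pi.add_apply, Function.comp_apply, smul_eq_mul]
  ring

lemma ellipseForm_chord_le {n P : ℝ} (hn : 0 ≤ n) (hP : 1 ≤ n * P) (hP1 : P ≤ 1) :
    ellipseForm n (n * (1 - P)) (n * P - 1) ≤ n * (n - 1) := by
  unfold ellipseForm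
  nlinarith [mul_nonneg (mul_nonneg hn (sub_nonneg.2 hP)) (sub_nonneg.2 hP1)]

lemma ellipseForm_coherence_bound_eq {n P : ℝ} (hn : 1 ≤ n) (hP : 0 ≤ P) (hP1 : P ≤ 1) :
    ellipseForm n ((n - 2) * (1 - P) + 2 * √(n - 1) * √P * √(1 - P)) (n * P - 1) =
      n * (n - 1) := by
  have hc : (√(n - 1) * √P * √(1 - P)) ^ 2 = (n - 1) * P * (1 - P) := by
    rw [mul_pow, mul_pow, Real.sq_sqrt (by linarith), Real.sq_sqrt hP,
      Real.sq_sqrt (by linarith)]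
  unfold ellipseForm
  linear_combination (4 * n) * hc

lemma add_le_or_ellipseForm_le {n P X : ℝ} (hn : 1 ≤ n) (hP : 1 / n ≤ P) (hP1 : P ≤ 1)
    (hX : X ≤ (n - 2) * (1 - P) + 2 * √(n - 1) * √P * √(1 - P)) :
    X + (n * P - 1) ≤ n - 1 ∨ ellipseForm n X (n * P - 1) ≤ n * (n - 1) := by
  have hnP : 1 ≤ n * P := by rwa [div_le_iff₀' (by linarith)] at hP
  refine (le_or_gt X (n * (1 - P))).imp (fun h => by linarith) fun h => ?_
  refine ((convexOn_ellipseForm hn _).le_max_of_mem_Icc trivial trivial ⟨h.le, hX⟩).trans ?_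
  exact max_le (ellipseForm_chord_le (by linarith) hnP hP1)
    (ellipseForm_coherence_bound_eq hn (by nlinarith) hP1).le

lemma normalized_ellipse_eq {n : ℝ} (hn : 1 < n) (X Q : ℝ) :
    ((X / (n - 1) + Q / (n - 1) - (n - 2) / (n - 1)) * ((n - 1) / √n)) ^ 2 +
      (X / (n - 1) - Q / (n - 1)) ^ 2 * ((n - 1) / n) = ellipseForm n X Q / (n * (n - 1)) := by
  have hn0 : (0 : ℝ) < n := by linarith
  have hn1 : n - 1 ≠ 0 := by linarith
  rw [mul_pow, div_pow (n - 1), Real.sq_sqrt hn0.le, ellipseForm]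
  field_simp

/-- Matrix form of Theorem 2: for an `n × n` complex matrix `B` with unit Frobenius
norm and `P = ∑ i, |B i i|² ≥ 1/n`, the normalized duality variables
`x = (1/(n-1)) ∑_{i≠j} |(Bᴴ B)_{ij}|` and `y = (nP-1)/(n-1)` lie in the region
`𝒯 ∪ ℰ`. -/
theorem duality_theorem_two_matrix (n : ℕ) (hn : 2 ≤ n)
    (B : Matrix (Fin n) (Fin n) ℂ)
    (hB : ∑ i, ∑ j, ‖B i j‖ ^ 2 = 1)
    (P : ℝ) (hP : P = ∑ i, ‖B i i‖ ^ 2) (hPn : 1 / (n : ℝ) ≤ P)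
    (x y : ℝ)
    (hx : x = (1 / ((n : ℝ) - 1)) * ∑ i, ∑ j ∈ univ.filter (fun j => j ≠ i),
      ‖(Bᴴ * B) i j‖)
    (hy : y = ((n : ℝ) * P - 1) / ((n : ℝ) - 1)) :
    x + y ≤ 1 ∨
      ((x + y - ((n : ℝ) - 2) / ((n : ℝ) - 1)) * (((n : ℝ) - 1) / Real.sqrt n)) ^ 2 +
        (x - y) ^ 2 * (((n : ℝ) - 1) / n) ≤ 1 := by
  have hn1 : (1 : ℝ) < n := by exact_mod_cast hn
  have hP1 : P ≤ 1 := hP ▸ hB ▸ sum_le_sum fun i _ =>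
    single_le_sum (fun j _ => sq_nonneg ‖B i j‖) (mem_univ i)
  have hX := sum_filter_ne_norm_conjTranspose_mul_self_le B
  rw [hB, ← hP, Fintype.card_fin] at hX
  rw [hx, one_div_mul_eq_div, hy, normalized_ellipse_eq hn1, div_le_one (by nlinarith), ← add_div,
    div_le_one (by linarith)]
  exact add_le_or_ellipseForm_le hn1.le hPn hP1 hX
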